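/- arXiv:0706.3425 — 5 statements merged into one kernel-verified Lean document; each statement's English description precedes it below -/
import Mathlib

section
/- Given a commutative diagram with exact rows 1 → A → B → C → 1 and compatible endomorphisms φ', φ, φ̄, if R(φ̄) < ∞, the fixed subgroup Fix(φ̄) is finite, and R(φ') = ∞, then R(φ) = ∞. -/
/-- Two elements are `φ`-twisted conjugate if `b = σ * a * (φ σ)⁻¹` for some `σ`. -/
def twistedConj {G : Type*} [Group G] (φ : G →* G) (a b : G) : Prop :=
  ∃ σ : G, b = σ * a * (φ σ)⁻¹

/-!
Twisted conjugacy classes of `A` map to those of `B` along `i`. Two classes `[a₀]`, `[a]` with the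
same image differ by some `σ ∈ B` whose image in `C` is fixed by `φ̄`, and the class of `a` is
determined by `p σ` alone: changing `σ` within its coset `i(A) σ` only twists `a` by an element of `A`.
So every fibre of `[a] ↦ [i a]` is the image of `Fix(φ̄)`, hence finite, and finitely many
`φ`-classes would force finitely many `φ'`-classes.
-/

namespace twistedConj

variable {G H : Type*} [Group G] [Group H]

theorem equivalence (φ : G →* G) : Equivalence (twistedConj φ) where
  refl _ := ⟨1, by simp⟩
  symm := by
    rintro a _ ⟨σ, rfl⟩
    exact ⟨σ⁻¹, by simp [mul_assoc]⟩
  trans := by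
    rintro a _ _ ⟨σ, rfl⟩ ⟨τ, rfl⟩
    exact ⟨τ * σ, by simp [mul_assoc]⟩

theorem quot_mk_eq_iff {φ : G →* G} {a b : G} :
    Quot.mk (twistedConj φ) a = Quot.mk (twistedConj φ) b ↔ twistedConj φ a b :=
  ⟨fun h => (equivalence φ).eqvGen_iff.mp (Quot.eq.mp h), Quot.sound⟩

theorem map {ψ : G →* G} {φ : H →* H} (f : G →* H) (hf : ∀ g, φ (f g) = f (ψ g)) {a b : G}
    (h : twistedConj ψ a b) : twistedConj φ (f a) (f b) := by
  obtain ⟨σ, rfl⟩ := h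
  exact ⟨f σ, by simp [hf]⟩

end twistedConj

section ShortExactSequence

variable {A B C : Type*} [Group A] [Group B] [Group C]
  {i : A →* B} {p : B →* C} {φ' : A →* A} {φ : B →* B} {φbar : C →* C}

theorem map_map_eq_one_of_range_eq_ker (hexact : i.range = p.ker) (a : A) : p (i a) = 1 := by
  rw [← MonoidHom.mem_ker, ← hexact]
  exact MonoidHom.mem_range.mpr ⟨a, rfl⟩

theorem twist_mem_range_of_isFixedPt (hexact : i.range = p.ker)
    (hc2 : ∀ b, φbar (p b) = p (φ b)) {θ : B} (hθ : φbar (p θ) = p θ) (a : A) :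
    θ * i a * (φ θ)⁻¹ ∈ i.range := by
  rw [hexact, MonoidHom.mem_ker, map_mul, map_mul, map_inv, ← hc2, hθ,
    map_map_eq_one_of_range_eq_ker hexact, mul_one, mul_inv_cancel]

theorem isFixedPt_of_twist_eq (hexact : i.range = p.ker)
    (hc2 : ∀ b, φbar (p b) = p (φ b)) {a₀ a : A} {σ : B}
    (h : i a = σ * i a₀ * (φ σ)⁻¹) : φbar (p σ) = p σ := by
  have := congrArg p h
  rw [map_mul, map_mul, map_inv, map_map_eq_one_of_range_eq_ker hexact,
    map_map_eq_one_of_range_eq_ker hexact, mul_one, ← hc2, eq_comm, mul_inv_eq_one] at this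
  exact this.symm

theorem twistedConj_of_twist_eq_of_map_eq (hi : Function.Injective i)
    (hexact : i.range = p.ker) (hc1 : ∀ a, φ (i a) = i (φ' a)) {a₀ a a' : A} {θ θ' : B}
    (hθ : p θ = p θ') (ha : i a = θ * i a₀ * (φ θ)⁻¹) (ha' : i a' = θ' * i a₀ * (φ θ')⁻¹) :
    twistedConj φ' a a' := by
  obtain ⟨α, hα⟩ : θ' * θ⁻¹ ∈ i.range := by
    rw [hexact, MonoidHom.mem_ker, map_mul, map_inv, hθ, mul_inv_cancel]
  refine ⟨α, hi ?_⟩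
  rw [map_mul, map_mul, map_inv, ← hc1, hα, ha, ha']
  simp only [map_mul, map_inv]
  group

theorem exists_fixedPoints_surjOn_fiber (hi : Function.Injective i) (hp : Function.Surjective p)
    (hexact : i.range = p.ker) (hc1 : ∀ a, φ (i a) = i (φ' a))
    (hc2 : ∀ b, φbar (p b) = p (φ b)) (a₀ : A) :
    ∃ g : {c : C // φbar c = c} → Quot (twistedConj φ'),
      ∀ a, twistedConj φ (i a₀) (i a) → Quot.mk _ a ∈ Set.range g := by
  choose θ hθ using hp
  have hfix (c : {c : C // φbar c = c}) : φbar (p (θ c)) = p (θ c) := by rw [hθ]; exact c.2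
  choose a ha using fun c => twist_mem_range_of_isFixedPt hexact hc2 (hfix c) a₀
  refine ⟨fun c => Quot.mk _ (a c), ?_⟩
  rintro a' ⟨σ, hσ⟩
  have hσfix := isFixedPt_of_twist_eq hexact hc2 hσ
  refine ⟨⟨p σ, hσfix⟩, Quot.sound ?_⟩
  exact twistedConj_of_twist_eq_of_map_eq hi hexact hc1 (hθ _) (ha _) hσ

theorem finite_quot_twistedConj_of_finite_fixedPoints (hi : Function.Injective i)
    (hp : Function.Surjective p) (hexact : i.range = p.ker) (hc1 : ∀ a, φ (i a) = i (φ' a))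
    (hc2 : ∀ b, φbar (p b) = p (φ b)) [Finite (Quot (twistedConj φ))]
    (hFix : {c : C | φbar c = c}.Finite) : Finite (Quot (twistedConj φ')) := by
  have : Finite {c : C // φbar c = c} := hFix.to_subtype
  let F := Quot.map i fun _ _ => twistedConj.map i hc1
  have hfiber (q : Quot (twistedConj φ)) : (F ⁻¹' {q}).Finite := by
    rcases (F ⁻¹' {q}).eq_empty_or_nonempty with h | ⟨⟨a₀⟩, ha₀⟩
    · simp [h]
    obtain ⟨g, hg⟩ := exists_fixedPoints_surjOn_fiber hi hp hexact hc1 hc2 a₀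
    refine (Set.finite_range g).subset ?_
    rintro ⟨a⟩ ha
    exact hg a (twistedConj.quot_mk_eq_iff.mp ((ha₀ : F _ = q).trans (ha : F _ = q).symm))
  rw [← Set.finite_univ_iff]
  exact Set.finite_univ.preimage' fun q _ => hfiber q

end ShortExactSequence

theorem stmt3_general {A B C : Type*} [Group A] [Group B] [Group C]
    (i : A →* B) (p : B →* C) (hi : Function.Injective i) (hp : Function.Surjective p)
    (hexact : i.range = p.ker)
    (φ' : A →* A) (φ : B →* B) (φbar : C →* C)
    (hcomm1 : φ.comp i = i.comp φ') (hcomm2 : φbar.comp p = p.comp φ)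
    (hFix : Set.Finite {c : C | φbar c = c})
    (hR' : Infinite (Quot (twistedConj φ'))) :
    Infinite (Quot (twistedConj φ)) := by
  rw [← not_finite_iff_infinite] at hR' ⊢
  intro hR
  exact hR' (finite_quot_twistedConj_of_finite_fixedPoints hi hp hexact
    (DFunLike.congr_fun hcomm1) (DFunLike.congr_fun hcomm2) hFix)

/-- For a commutative diagram of endomorphisms of a short exact sequence
`1 → A → B → C → 1`, if `R(φ̄) < ∞`, `Fix(φ̄)` is finite, and `R(φ') = ∞`,
then `R(φ) = ∞`. -/
theorem stmt3 {A B C : Type*} [Group A] [Group B] [Group C]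
    (i : A →* B) (p : B →* C) (hi : Function.Injective i) (hp : Function.Surjective p)
    (hexact : i.range = p.ker)
    (φ' : A →* A) (φ : B →* B) (φbar : C →* C)
    (hcomm1 : φ.comp i = i.comp φ') (hcomm2 : φbar.comp p = p.comp φ)
    (hR : Finite (Quot (twistedConj φbar)))
    (hFix : Set.Finite {c : C | φbar c = c})
    (hR' : Infinite (Quot (twistedConj φ'))) :
    Infinite (Quot (twistedConj φ)) :=
  stmt3_general i p hi hp hexact φ' φ φbar hcomm1 hcomm2 hFix hR'
end

section
/- Every endomorphism κ of the Klein bottle group π = ⟨α, β | αβαβ^{-1}⟩ satisfies κ(α) = α^ε for some integer ε; that is, the image of α under any endomorphism is a power of α. -/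
/-- The single relator of the Klein bottle group. -/
def kleinRels : Set (FreeGroup (Fin 2)) :=
  {FreeGroup.of 0 * FreeGroup.of 1 * FreeGroup.of 0 * (FreeGroup.of 1)⁻¹}

/-- The Klein bottle group `⟨a, b | a b a b⁻¹⟩`. -/
abbrev KleinGroup := PresentedGroup kleinRels

/-- The generator `a` (also called `x` or `α`). -/
def ka : KleinGroup := PresentedGroup.of 0

/-- The generator `b` (also called `y` or `β`). -/
def kb : KleinGroup := PresentedGroup.of 1

/-!
Counting the exponent of `b` gives a homomorphism `φ = bExponent` to `ℤ`. Applying `φ ∘ κ` to the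
relator `a b a b⁻¹` yields `2 φ(κ a) = 0`, so `φ(κ a) = 0`. Since `b a b⁻¹ = a⁻¹`, every element
has the form `a ^ m * b ^ k`, whose `φ`-value is `k`; hence the kernel of `φ` is generated by `a`.
-/

section ConjEqInv

variable {G : Type*} [Group G] {a b : G}

theorem zpow_conj_eq_zpow_negOnePow (h : b * a * b⁻¹ = a⁻¹) (k : ℤ) :
    b ^ k * a * (b ^ k)⁻¹ = a ^ (k.negOnePow : ℤ) := by
  have step (k : ℤ) : b ^ (k + 1) * a * (b ^ (k + 1))⁻¹ = a ^ ((k + 1).negOnePow : ℤ) ↔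
      b ^ k * a * (b ^ k)⁻¹ = a ^ (k.negOnePow : ℤ) := by
    have hlhs : b ^ (k + 1) * a * (b ^ (k + 1))⁻¹ = b * (b ^ k * a * (b ^ k)⁻¹) * b⁻¹ := by
      group
    have hrhs : a ^ ((k + 1).negOnePow : ℤ) = b * a ^ (k.negOnePow : ℤ) * b⁻¹ := by
      rw [Int.negOnePow_succ, Units.val_neg, zpow_neg, ← inv_zpow, ← h, conj_zpow]
    rw [hlhs, hrhs, mul_left_inj, mul_right_inj]
  induction k using Int.induction_on with
  | zero => simp
  | succ k ih => exact (step k).2 ih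
  | pred k ih => exact (step _).1 (by simpa using ih)

theorem zpow_mul_zpow_of_conj_eq_inv (h : b * a * b⁻¹ = a⁻¹) (k n : ℤ) :
    b ^ k * a ^ n = a ^ (k.negOnePow * n : ℤ) * b ^ k := by
  rw [zpow_mul, ← zpow_conj_eq_zpow_negOnePow h, conj_zpow, inv_mul_cancel_right]

theorem exists_eq_zpow_mul_zpow (hgen : Subgroup.closure {a, b} = ⊤)
    (h : b * a * b⁻¹ = a⁻¹) (g : G) : ∃ m k : ℤ, g = a ^ m * b ^ k := by
  induction (hgen ▸ Subgroup.mem_top g : g ∈ Subgroup.closure {a, b})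
    using Subgroup.closure_induction with
  | mem x hx =>
    rcases hx with rfl | rfl
    · exact ⟨1, 0, by simp⟩
    · exact ⟨0, 1, by simp⟩
  | one => exact ⟨0, 0, by simp⟩
  | mul x y _ _ hx hy =>
    obtain ⟨m, k, rfl⟩ := hx
    obtain ⟨n, l, rfl⟩ := hy
    refine ⟨m + k.negOnePow * n, k + l, ?_⟩
    rw [mul_assoc, ← mul_assoc (b ^ k), zpow_mul_zpow_of_conj_eq_inv h]
    group
  | inv x _ hx =>
    obtain ⟨m, k, rfl⟩ := hx
    refine ⟨(-k).negOnePow * -m, -k, ?_⟩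
    rw [← zpow_mul_zpow_of_conj_eq_inv h]
    group

theorem map_eq_one_of_mul_mul_mul_inv_eq_one {H : Type*} [CommGroup H] [IsMulTorsionFree H]
    (f : G →* H) {x y : G} (h : x * y * x * y⁻¹ = 1) : f x = 1 := by
  have hsq : f x * f x = 1 := by
    simpa only [map_mul, map_inv, map_one, mul_right_comm _ (f y), inv_mul_cancel_right]
      using congrArg f h
  rwa [← self_eq_inv, eq_inv_iff_mul_eq_one]

end ConjEqInv

theorem ka_mul_kb_mul_ka_mul_kb_inv : ka * kb * ka * kb⁻¹ = 1 :=
  PresentedGroup.one_of_mem rfl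

theorem kb_mul_ka_mul_kb_inv : kb * ka * kb⁻¹ = ka⁻¹ :=
  eq_inv_of_mul_eq_one_right <| by rw [← ka_mul_kb_mul_ka_mul_kb_inv]; group

theorem closure_ka_kb : Subgroup.closure {ka, kb} = ⊤ := by
  rw [← PresentedGroup.closure_range_of]
  congr 1
  ext
  simp [Fin.exists_fin_two, ka, kb, eq_comm]

def bExponent : KleinGroup →* Multiplicative ℤ :=
  PresentedGroup.toGroup (f := ![1, .ofAdd 1]) <| by
    rintro r rfl
    simp

@[simp] theorem bExponent_ka : bExponent ka = 1 := PresentedGroup.toGroup.of _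
@[simp] theorem bExponent_kb : bExponent kb = .ofAdd 1 := PresentedGroup.toGroup.of _

theorem mem_zpowers_ka_of_bExponent_eq_one {g : KleinGroup} (hg : bExponent g = 1) :
    g ∈ Subgroup.zpowers ka := by
  obtain ⟨m, k, rfl⟩ := exists_eq_zpow_mul_zpow closure_ka_kb kb_mul_ka_mul_kb_inv g
  obtain rfl : k = 0 := by simpa using hg
  simp

/-- Every endomorphism `κ` of the Klein bottle group sends the generator `a`
to a power of `a`. -/
theorem stmt5 (κ : KleinGroup →* KleinGroup) : ∃ ε : ℤ, κ ka = ka ^ ε := by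
  have hrel : κ ka * κ kb * κ ka * (κ kb)⁻¹ = 1 := by
    simpa only [map_mul, map_inv, map_one] using congrArg κ ka_mul_kb_mul_ka_mul_kb_inv
  obtain ⟨ε, hε⟩ := Subgroup.mem_zpowers_iff.mp <|
    mem_zpowers_ka_of_bExponent_eq_one (map_eq_one_of_mul_mul_mul_inv_eq_one bExponent hrel)
  exact ⟨ε, hε.symm⟩
end

section
/- Every automorphism φ of the Klein bottle group ℤ ⋊ ℤ has infinitely many φ-twisted conjugacy classes, i.e., R(φ) = ∞; hence the Klein bottle group has the R_∞ property. -/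
/-!
The Klein bottle group is isomorphic to the model `ℤ ⋊ ℤ` with
`(p, q) * (r, s) = (p + (-1)^q r, q + s)`, generated by `a = (1, 0)` and `b = (0, 1)`.
Since `b a b⁻¹ = a⁻¹`, an automorphism `ψ` maps `a` into the kernel `ℤ × 0` of the second
coordinate, so it acts on that kernel by a sign `e` and on the second coordinate by a sign `d`.
If `d = 1`, the second coordinate is constant on twisted conjugacy classes. If `d = -1`,
twisting by `σ` shifts the second coordinate by `2 σ.q`, so within a slice `q = c` only twists
by `σ = (m, 0)` remain, and these move `(n, c)` to `(n + (1 - (-1)^c e) m, c)`. Choosing `c`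
with `(-1)^c e = 1` gives the pairwise non-conjugate family `(n, c)`.
-/

section TwistedConj

variable {G H : Type*} [Group G] [Group H]

theorem twistedConj_equivalence (φ : G →* G) : Equivalence (twistedConj φ) where
  refl a := ⟨1, by simp⟩
  symm := fun ⟨σ, h⟩ => ⟨σ⁻¹, by rw [h, map_inv]; group⟩
  trans := fun ⟨σ, h₁⟩ ⟨τ, h₂⟩ => ⟨τ * σ, by rw [h₂, h₁, map_mul]; group⟩

theorem twistedConj.map_s9 {φ : G →* G} {ψ : H →* H} (f : G →* H) (hf : ∀ g, ψ (f g) = f (φ g))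
    {a b : G} (h : twistedConj φ a b) : twistedConj ψ (f a) (f b) := by
  obtain ⟨σ, rfl⟩ := h
  exact ⟨f σ, by rw [hf, map_mul, map_mul, map_inv]⟩

theorem infinite_quot_twistedConj {ι : Type*} [Infinite ι] (φ : G →* G) (f : ι → G)
    (hf : ∀ i j, twistedConj φ (f i) (f j) → i = j) : Infinite (Quot (twistedConj φ)) :=
  Infinite.of_injective (fun i => Quot.mk _ (f i)) fun i j h =>
    hf i j ((twistedConj_equivalence φ).eqvGen_iff.mp (Quot.eq.mp h))

end TwistedConj

@[ext] structure KleinModel where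
  p : ℤ
  q : ℤ

namespace KleinModel

instance : Mul KleinModel := ⟨fun x y => ⟨x.p + x.q.negOnePow * y.p, x.q + y.q⟩⟩
instance : One KleinModel := ⟨⟨0, 0⟩⟩
instance : Inv KleinModel := ⟨fun x => ⟨-(x.q.negOnePow * x.p), -x.q⟩⟩

@[simp] theorem mul_p (x y : KleinModel) : (x * y).p = x.p + x.q.negOnePow * y.p := rfl
@[simp] theorem mul_q (x y : KleinModel) : (x * y).q = x.q + y.q := rfl
@[simp] theorem inv_p (x : KleinModel) : x⁻¹.p = -(x.q.negOnePow * x.p) := rfl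
@[simp] theorem inv_q (x : KleinModel) : x⁻¹.q = -x.q := rfl
@[simp] theorem one_p : (1 : KleinModel).p = 0 := rfl
@[simp] theorem one_q : (1 : KleinModel).q = 0 := rfl

instance : Group KleinModel :=
  .ofLeftAxioms
    (fun x y z => by ext <;> simp [Int.negOnePow_add] <;> ring)
    (fun x => by ext <;> simp)
    (fun x => by ext <;> simp [Int.negOnePow_neg])

def a : KleinModel := ⟨1, 0⟩
def b : KleinModel := ⟨0, 1⟩

theorem mk_zero_zpow (p n : ℤ) : (⟨p, 0⟩ : KleinModel) ^ n = ⟨p * n, 0⟩ := by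
  induction n using Int.induction_on with
  | zero => ext <;> simp
  | succ i ih => rw [zpow_add_one, ih]; ext <;> simp [mul_add]
  | pred i ih => rw [zpow_sub_one, ih]; ext <;> simp [sub_eq_add_neg, mul_add]

theorem zero_mk_zpow (q n : ℤ) : (⟨0, q⟩ : KleinModel) ^ n = ⟨0, q * n⟩ := by
  induction n using Int.induction_on with
  | zero => ext <;> simp
  | succ i ih => rw [zpow_add_one, ih]; ext <;> simp [mul_add]
  | pred i ih => rw [zpow_sub_one, ih]; ext <;> simp [sub_eq_add_neg, mul_add]

theorem mk_eq_a_zpow_mul_b_zpow (p q : ℤ) : (⟨p, q⟩ : KleinModel) = a ^ p * b ^ q := by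
  ext <;> simp [a, b, mk_zero_zpow, zero_mk_zpow]

theorem q_zpow (x : KleinModel) (n : ℤ) : (x ^ n).q = n * x.q := by
  induction n using Int.induction_on with
  | zero => simp
  | succ i ih => rw [zpow_add_one, mul_q, ih]; ring
  | pred i ih => rw [zpow_sub_one, mul_q, inv_q, ih]; ring

theorem b_mul_a_mul_b_inv : b * a * b⁻¹ = a⁻¹ := by
  ext <;> simp [a, b]

section Endomorphism

variable (ψ : KleinModel →* KleinModel)

theorem q_apply_a : (ψ a).q = 0 := by
  have h := congrArg q (by simpa using congrArg ψ b_mul_a_mul_b_inv)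
  simp only [mul_q, inv_q] at h
  omega

theorem apply_mk_zero (p : ℤ) : ψ ⟨p, 0⟩ = ⟨(ψ a).p * p, 0⟩ := by
  have ha : ψ a = ⟨(ψ a).p, 0⟩ := KleinModel.ext rfl (q_apply_a ψ)
  rw [← one_mul p, ← mk_zero_zpow, map_zpow, ← a, ha, mk_zero_zpow, one_mul]

theorem q_apply (x : KleinModel) : (ψ x).q = (ψ b).q * x.q := by
  obtain ⟨p, q⟩ := x
  conv_lhs => rw [mk_eq_a_zpow_mul_b_zpow, map_mul, map_zpow, map_zpow]
  rw [mul_q, q_zpow, q_zpow, q_apply_a]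
  ring

theorem q_eq_of_twistedConj (hψ : (ψ b).q = 1) {x y : KleinModel} (h : twistedConj ψ x y) :
    x.q = y.q := by
  obtain ⟨σ, rfl⟩ := h
  simp [q_apply, hψ]

theorem eq_of_twistedConj_mk (hψb : (ψ b).q = -1) {c : ℤ} (hc : c.negOnePow * (ψ a).p = 1)
    {n k : ℤ} (h : twistedConj ψ ⟨n, c⟩ ⟨k, c⟩) : n = k := by
  obtain ⟨σ, hσ⟩ := h
  have hσq : σ.q = 0 := by
    have := congrArg q hσ
    simp only [mul_q, inv_q, q_apply, hψb, neg_mul, one_mul, neg_neg] at this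
    omega
  rw [show σ = ⟨σ.p, 0⟩ from KleinModel.ext rfl hσq, apply_mk_zero] at hσ
  have := congrArg p hσ
  simp only [mul_p, mul_q, inv_p, Int.negOnePow_zero, Units.val_one, one_mul, zero_add,
    mul_neg] at this
  linear_combination -this + σ.p * hc

end Endomorphism

section Automorphism

variable (ψ : MulAut KleinModel)

theorem q_apply_b_eq_one_or_neg_one : (ψ b).q = 1 ∨ (ψ b).q = -1 := by
  have h := q_apply ψ.toMonoidHom (ψ.symm b)
  simp only [MulEquiv.coe_toMonoidHom, MulEquiv.apply_symm_apply] at h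
  exact Int.eq_one_or_neg_one_of_mul_eq_one (by simpa [b] using h.symm)

theorem p_apply_a_eq_one_or_neg_one : (ψ a).p = 1 ∨ (ψ a).p = -1 := by
  have ha : ψ.symm a = ⟨(ψ.symm a).p, 0⟩ := KleinModel.ext rfl (q_apply_a ψ.symm.toMonoidHom)
  have h : ψ.toMonoidHom ⟨(ψ.symm a).p, 0⟩ = a := by simp [← ha]
  rw [apply_mk_zero] at h
  exact Int.eq_one_or_neg_one_of_mul_eq_one (by simpa [a] using congrArg p h)

theorem exists_pairwise_not_twistedConj :
    ∃ f : ℤ → KleinModel, ∀ n k, twistedConj ψ.toMonoidHom (f n) (f k) → n = k := by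
  rcases q_apply_b_eq_one_or_neg_one ψ with hb | hb
  · exact ⟨fun n => ⟨0, n⟩, fun n k h => q_eq_of_twistedConj _ hb h⟩
  · obtain ⟨c, hc⟩ : ∃ c : ℤ, c.negOnePow * (ψ a).p = 1 := by
      rcases p_apply_a_eq_one_or_neg_one ψ with ha | ha
      exacts [⟨0, by simp [ha]⟩, ⟨1, by simp [ha]⟩]
    exact ⟨fun n => ⟨n, c⟩, fun n k h => eq_of_twistedConj_mk _ hb hc h⟩

end Automorphism

end KleinModel

theorem semiconjBy_kb_ka : SemiconjBy kb ka ka⁻¹ :=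
  calc kb * ka = ka⁻¹ * (ka * kb * ka * kb⁻¹) * kb := by group
    _ = ka⁻¹ * kb := by rw [ka_mul_kb_mul_ka_mul_kb_inv, mul_one]

theorem semiconjBy_kb_ka_zpow (m : ℤ) : SemiconjBy kb (ka ^ m) (ka ^ (-m)) := by
  simpa only [inv_zpow'] using semiconjBy_kb_ka.zpow_right m

theorem semiconjBy_kb_zpow_ka_zpow (n m : ℤ) :
    SemiconjBy (kb ^ n) (ka ^ m) (ka ^ ((n.negOnePow : ℤ) * m)) := by
  induction n using Int.induction_on generalizing m with
  | zero => simp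
  | succ i ih =>
    rw [zpow_add_one, Int.negOnePow_succ]
    simpa using (ih (-m)).mul_left (semiconjBy_kb_ka_zpow m)
  | pred i ih =>
    rw [zpow_sub_one, Int.negOnePow_sub, Int.negOnePow_one]
    simpa using (ih (-m)).mul_left (by simpa using (semiconjBy_kb_ka_zpow (-m)).inv_symm_left)

def toKleinModel : KleinGroup →* KleinModel :=
  PresentedGroup.toGroup (f := ![KleinModel.a, KleinModel.b]) (by
    rintro r rfl
    ext <;> simp [KleinModel.a, KleinModel.b])

def ofKleinModel : KleinModel →* KleinGroup where
  toFun x := ka ^ x.p * kb ^ x.q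
  map_one' := by simp
  map_mul' x y := by
    simp only [KleinModel.mul_p, KleinModel.mul_q, zpow_add, mul_assoc]
    rw [← mul_assoc (kb ^ x.q), (semiconjBy_kb_zpow_ka_zpow x.q y.p).eq, mul_assoc]

def kleinEquiv : KleinGroup ≃* KleinModel :=
  toKleinModel.toMulEquiv ofKleinModel
    (PresentedGroup.ext fun i => by
      fin_cases i <;> simp [toKleinModel, ofKleinModel, KleinModel.a, KleinModel.b, ka, kb])
    (by ext x <;> simp [toKleinModel, ofKleinModel, ka, kb, KleinModel.a, KleinModel.b,
      KleinModel.mk_zero_zpow, KleinModel.zero_mk_zpow])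

/-- Every automorphism of the Klein bottle group has infinitely many twisted
conjugacy classes: the Klein bottle group has the `R_∞` property. -/
theorem stmt9 (φ : MulAut KleinGroup) :
    Infinite (Quot (twistedConj φ.toMonoidHom)) := by
  let ψ : MulAut KleinModel := (kleinEquiv.symm.trans φ).trans kleinEquiv
  obtain ⟨f, hf⟩ := KleinModel.exists_pairwise_not_twistedConj ψ
  refine infinite_quot_twistedConj _ (fun n => kleinEquiv.symm (f n)) fun n k h => hf n k ?_
  simpa using h.map_s9 kleinEquiv.toMonoidHom (ψ := ψ.toMonoidHom) (by simp [ψ])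
end

section
/- The infinite dihedral-type group ℤ ⋊ ℤ/2 (with ℤ/2 acting by negation) has the R_∞ property: every automorphism has infinitely many twisted conjugacy classes. -/
theorem Quot.infinite_of_infinite_range {α β : Type*} {r : α → α → Prop} {f : α → β}
    (hf : ∀ a b, r a b → f a = f b) (hrange : (Set.range f).Infinite) : Infinite (Quot r) := by
  by_contra hfin
  rw [not_infinite_iff_finite] at hfin
  exact hrange (Set.range_quot_lift hf ▸ Set.finite_range _)

theorem Int.infinite_range_sq_two_mul_sub (k : ℤ) :
    (Set.range fun i : ℤ => (2 * i - k) ^ 2).Infinite := by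
  refine Set.infinite_of_not_bddAbove fun ⟨B, hB⟩ => ?_
  have : (2 * (|B| + |k| + 1) - k) ^ 2 ≤ B := hB ⟨_, rfl⟩
  nlinarith [le_abs_self B, le_abs_self k, neg_abs_le k]

namespace DihedralGroup

variable {n : ℕ}

section MapGenerators

variable {F : Type*} [FunLike F (DihedralGroup n) (DihedralGroup n)]
  [MonoidHomClass F (DihedralGroup n) (DihedralGroup n)] {φ : F} {u k : ZMod n}

theorem map_r_of_map_r_one (hu : φ (r 1) = r u) (i : ZMod n) : φ (r i) = r (u * i) := by
  rw [← ZMod.intCast_zmod_cast i, ← r_one_zpow, map_zpow, hu, r_zpow]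

theorem map_sr_of_map_r_one (hu : φ (r 1) = r u) (hk : φ (sr 0) = sr k) (j : ZMod n) :
    φ (sr j) = sr (k + u * j) := by
  rw [← zero_add j, ← sr_mul_r, map_mul, hk, map_r_of_map_r_one hu, sr_mul_r, zero_add]

end MapGenerators

def rInvariant (k : ZMod n) : DihedralGroup n → ZMod n
  | r i => (2 * i - k) ^ 2
  | sr _ => 0

def srInvariant (k : ZMod n) : DihedralGroup n → ZMod n
  | r _ => 0
  | sr j => (2 * j - k) ^ 2

theorem rInvariant_eq_of_twistedConj {φ : DihedralGroup n →* DihedralGroup n} {k : ZMod n}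
    (hr : φ (r 1) = r 1) (hsr : φ (sr 0) = sr k) {a b : DihedralGroup n}
    (h : twistedConj φ a b) : rInvariant k a = rInvariant k b := by
  obtain ⟨σ, rfl⟩ := h
  rcases σ with m | m <;> rcases a with i | i <;>
    simp only [map_r_of_map_r_one hr, map_sr_of_map_r_one hr hsr, rInvariant, r_mul_r, r_mul_sr,
      sr_mul_r, sr_mul_sr, inv_r, inv_sr] <;> ring

theorem srInvariant_eq_of_twistedConj {φ : DihedralGroup n →* DihedralGroup n} {k : ZMod n}
    (hr : φ (r 1) = r (-1)) (hsr : φ (sr 0) = sr k) {a b : DihedralGroup n}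
    (h : twistedConj φ a b) : srInvariant k a = srInvariant k b := by
  obtain ⟨σ, rfl⟩ := h
  rcases σ with m | m <;> rcases a with i | i <;>
    simp only [map_r_of_map_r_one hr, map_sr_of_map_r_one hr hsr, srInvariant, r_mul_r, r_mul_sr,
      sr_mul_r, sr_mul_sr, inv_r, inv_sr] <;> ring

theorem infinite_range_rInvariant (k : ZMod 0) : (Set.range (rInvariant k)).Infinite :=
  (Int.infinite_range_sq_two_mul_sub k).mono (Set.range_comp_subset_range r (rInvariant k))

theorem infinite_range_srInvariant (k : ZMod 0) : (Set.range (srInvariant k)).Infinite :=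
  (Int.infinite_range_sq_two_mul_sub k).mono (Set.range_comp_subset_range sr (srInvariant k))

theorem exists_eq_r_of_orderOf_eq_zero {x : DihedralGroup 0} (hx : orderOf x = 0) :
    ∃ i, x = r i := by
  rcases x with i | i
  · exact ⟨i, rfl⟩
  · simp [orderOf_sr] at hx

theorem exists_map_generators_of_mulAut (φ : MulAut (DihedralGroup 0)) :
    ∃ u k : ZMod 0, (u = 1 ∨ u = -1) ∧ φ (r 1) = r u ∧ φ (sr 0) = sr k := by
  have hr1 : orderOf (r 1 : DihedralGroup 0) = 0 := orderOf_r_one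
  obtain ⟨u, hu⟩ := exists_eq_r_of_orderOf_eq_zero ((MulEquiv.orderOf_eq φ _).trans hr1)
  obtain ⟨v, hv⟩ := exists_eq_r_of_orderOf_eq_zero ((MulEquiv.orderOf_eq φ.symm _).trans hr1)
  have huv : u * v = 1 := by
    have := φ.apply_symm_apply (r 1)
    rwa [hv, map_r_of_map_r_one hu, r.injEq] at this
  have hu1 : u = 1 ∨ u = -1 := Int.eq_one_or_neg_one_of_mul_eq_one huv
  rcases hsr : φ (sr 0) with j | k
  · have : φ (r (u * j)) = φ (sr 0) := by
      rw [map_r_of_map_r_one hu, hsr, ← mul_assoc]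
      rcases hu1 with rfl | rfl <;> simp
    cases φ.injective this
  · exact ⟨u, k, hu1, hu, rfl⟩

end DihedralGroup

/-- The infinite dihedral group `ℤ ⋊ ℤ/2` (realized as `DihedralGroup 0`) has the
`R_∞` property: every automorphism has infinitely many twisted conjugacy classes. -/
theorem stmt11 (φ : MulAut (DihedralGroup 0)) :
    Infinite (Quot (twistedConj φ.toMonoidHom)) := by
  obtain ⟨u, k, rfl | rfl, hr, hsr⟩ := DihedralGroup.exists_map_generators_of_mulAut φ
  · exact Quot.infinite_of_infinite_range
      (fun _ _ => DihedralGroup.rInvariant_eq_of_twistedConj hr hsr)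
      (DihedralGroup.infinite_range_rInvariant k)
  · exact Quot.infinite_of_infinite_range
      (fun _ _ => DihedralGroup.srInvariant_eq_of_twistedConj hr hsr)
      (DihedralGroup.infinite_range_srInvariant k)
end

section
/- For each integer r ≠ 0, let N_r = ⟨a, b, c | [a,c] = 1, [b,c] = 1, [a,b] = c^r⟩. The map a ↦ a²b, b ↦ a⁵b² (suitably defined on c) extends to an automorphism φ of N_r with finite Reidemeister number; hence N_r does not have the R_∞ property. -/
open scoped commutatorElement

/-- The relators of `N_r = ⟨a, b, c | [a,c] = 1, [b,c] = 1, [a,b] = c^r⟩`. -/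
def NrRels (r : ℤ) : Set (FreeGroup (Fin 3)) :=
  {⁅(FreeGroup.of 0 : FreeGroup (Fin 3)), FreeGroup.of 2⁆,
    ⁅(FreeGroup.of 1 : FreeGroup (Fin 3)), FreeGroup.of 2⁆,
    ⁅(FreeGroup.of 0 : FreeGroup (Fin 3)), FreeGroup.of 1⁆ * (FreeGroup.of 2) ^ (-r)}

section CommutatorPowers

variable {G : Type*} [Group G] {x y : G}

theorem commutatorElement_zpow_left (h : Commute x ⁅x, y⁆) (m : ℤ) :
    ⁅x ^ m, y⁆ = ⁅x, y⁆ ^ m := by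
  induction m using Int.induction_on with
  | zero => simp
  | succ m ih =>
    calc ⁅x ^ ((m : ℤ) + 1), y⁆
        = x * ⁅x ^ (m : ℤ), y⁆ * x⁻¹ * ⁅x, y⁆ := by simp only [commutatorElement_def]; group
      _ = ⁅x, y⁆ ^ ((m : ℤ) + 1) := by
          rw [ih, (h.zpow_right _).mul_inv_cancel, zpow_add_one]
  | pred m ih =>
    calc ⁅x ^ (-(m : ℤ) - 1), y⁆
        = x⁻¹ * (⁅x ^ (-(m : ℤ)), y⁆ * ⁅x, y⁆⁻¹) * x := by simp only [commutatorElement_def]; group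
      _ = ⁅x, y⁆ ^ (-(m : ℤ) - 1) := by
          rw [ih, ← zpow_sub_one, (h.zpow_right _).inv_mul_cancel]

theorem commutatorElement_zpow_right (h : Commute y ⁅x, y⁆) (n : ℤ) :
    ⁅x, y ^ n⁆ = ⁅x, y⁆ ^ n := by
  have h' : Commute y ⁅y, x⁆ := by rw [← commutatorElement_inv]; exact h.inv_right
  rw [← commutatorElement_inv, commutatorElement_zpow_left h', ← commutatorElement_inv, inv_zpow,
    inv_inv]

theorem commutatorElement_zpow_zpow (hx : Commute x ⁅x, y⁆) (hy : Commute y ⁅x, y⁆)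
    (m n : ℤ) : ⁅x ^ m, y ^ n⁆ = ⁅x, y⁆ ^ (m * n) := by
  have hy' : Commute y ⁅x ^ m, y⁆ := by
    rw [commutatorElement_zpow_left hx]; exact hy.zpow_right m
  rw [commutatorElement_zpow_right hy', commutatorElement_zpow_left hx, zpow_mul]

end CommutatorPowers

/-- Coordinates `(m, n, k)` of the normal form `a ^ m * b ^ n * c ^ k` of an element of `N_r`. -/
@[ext]
structure NrCoord (r : ℤ) where
  m : ℤ
  n : ℤ
  k : ℤ

namespace NrCoord

variable {r : ℤ}

instance : Mul (NrCoord r) := ⟨fun x y => ⟨x.m + y.m, x.n + y.n, x.k + y.k - r * x.n * y.m⟩⟩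

instance : One (NrCoord r) := ⟨⟨0, 0, 0⟩⟩

instance : Inv (NrCoord r) := ⟨fun x => ⟨-x.m, -x.n, -x.k - r * x.n * x.m⟩⟩

theorem mul_def (x y : NrCoord r) :
    x * y = ⟨x.m + y.m, x.n + y.n, x.k + y.k - r * x.n * y.m⟩ := rfl

theorem one_def : (1 : NrCoord r) = ⟨0, 0, 0⟩ := rfl

theorem inv_def (x : NrCoord r) : x⁻¹ = ⟨-x.m, -x.n, -x.k - r * x.n * x.m⟩ := rfl

instance : Group (NrCoord r) :=
  Group.ofLeftAxioms (fun _ _ _ => by ext <;> simp only [mul_def] <;> ring)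
    (fun _ => by ext <;> simp [mul_def, one_def])
    (fun _ => by ext <;> simp only [mul_def, inv_def, one_def] <;> ring)

-- `p * (p - 1)` is even, so the division is exact.
theorem zpow_def (x : NrCoord r) (p : ℤ) :
    x ^ p = ⟨p * x.m, p * x.n, p * x.k - r * x.n * x.m * (p * (p - 1) / 2)⟩ := by
  induction p using Int.induction_on with
  | zero => simp [one_def]
  | succ p ih =>
    have h : ((p : ℤ) + 1) * ((p : ℤ) + 1 - 1) / 2 = p * (p - 1) / 2 + p := by
      rw [show ((p : ℤ) + 1) * ((p : ℤ) + 1 - 1) = p * (p - 1) + p * 2 by ring,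
        Int.add_mul_ediv_right _ _ two_ne_zero]
    rw [zpow_add_one, ih, mul_def, h]
    ext <;> simp only <;> ring
  | pred p ih =>
    have h : (-(p : ℤ) - 1) * (-(p : ℤ) - 1 - 1) / 2 = -p * (-p - 1) / 2 + (p + 1) := by
      rw [show (-(p : ℤ) - 1) * (-(p : ℤ) - 1 - 1) = -p * (-p - 1) + (p + 1) * 2 by ring,
        Int.add_mul_ediv_right _ _ two_ne_zero]
    rw [zpow_sub_one, ih, inv_def, mul_def, h]
    ext <;> simp only <;> ring

def det (x y : NrCoord r) : ℤ := x.m * y.n - x.n * y.m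

theorem commutatorElement_eq (x y : NrCoord r) : ⁅x, y⁆ = ⟨0, 0, r * det x y⟩ := by
  simp only [commutatorElement_def, mul_def, inv_def, det]
  ext <;> simp only <;> ring

end NrCoord

abbrev Nr (r : ℤ) := PresentedGroup (NrRels r)

namespace Nr

variable (r : ℤ)

def a : Nr r := PresentedGroup.of 0

def b : Nr r := PresentedGroup.of 1

def c : Nr r := PresentedGroup.of 2

variable {r}

theorem commute_a_c : Commute (a r) (c r) := by
  rw [← commutatorElement_eq_one_iff_commute]
  have h := PresentedGroup.one_of_mem (rels := NrRels r) (Or.inl rfl)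
  rwa [map_commutatorElement] at h

theorem commute_b_c : Commute (b r) (c r) := by
  rw [← commutatorElement_eq_one_iff_commute]
  have h := PresentedGroup.one_of_mem (rels := NrRels r) (Or.inr (Or.inl rfl))
  rwa [map_commutatorElement] at h

theorem commutatorElement_a_b : ⁅a r, b r⁆ = c r ^ r := by
  have h := PresentedGroup.one_of_mem (rels := NrRels r) (Or.inr (Or.inr rfl))
  rwa [map_mul, map_commutatorElement, map_zpow, mul_eq_one_iff_eq_inv, ← zpow_neg, neg_neg] at h

theorem commute_c (g : Nr r) : Commute (c r) g := by
  have hg : g ∈ Subgroup.centralizer {c r} := by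
    refine PresentedGroup.generated_by _ _ (fun i => ?_) g
    rw [Subgroup.mem_centralizer_singleton_iff]
    fin_cases i
    exacts [(commute_a_c (r := r)).eq, (commute_b_c (r := r)).eq, rfl]
  exact (Subgroup.mem_centralizer_singleton_iff.mp hg).symm

theorem commutatorElement_zpow_a_zpow_b (m n : ℤ) :
    ⁅a r ^ m, b r ^ n⁆ = c r ^ (r * n * m) := by
  have hz (g : Nr r) : Commute g ⁅a r, b r⁆ :=
    commutatorElement_a_b ▸ ((commute_c g).zpow_left r).symm
  rw [commutatorElement_zpow_zpow (hz _) (hz _), commutatorElement_a_b, ← zpow_mul, mul_assoc,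
    mul_comm m]

theorem zpow_b_mul_zpow_a (m n : ℤ) :
    b r ^ n * a r ^ m = a r ^ m * b r ^ n * c r ^ (-(r * n * m)) :=
  calc b r ^ n * a r ^ m = ⁅a r ^ m, b r ^ n⁆⁻¹ * (a r ^ m * b r ^ n) := by
        rw [commutatorElement_def]; group
    _ = a r ^ m * b r ^ n * c r ^ (-(r * n * m)) := by
        rw [commutatorElement_zpow_a_zpow_b, ← zpow_neg, ((commute_c _).zpow_left _).eq]

def ofCoord : NrCoord r →* Nr r where
  toFun x := a r ^ x.m * b r ^ x.n * c r ^ x.k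
  map_one' := by simp [NrCoord.one_def]
  map_mul' x y := by
    have hc (j : ℤ) (g : Nr r) : c r ^ j * g = g * c r ^ j := ((commute_c g).zpow_left j).eq
    calc a r ^ (x * y).m * b r ^ (x * y).n * c r ^ (x * y).k
        = a r ^ x.m * (a r ^ y.m * b r ^ x.n) * (c r ^ (-(r * x.n * y.m)) * b r ^ y.n)
            * c r ^ (x.k + y.k) := by
          rw [hc, NrCoord.mul_def]
          group
      _ = a r ^ x.m * (b r ^ x.n * a r ^ y.m) * b r ^ y.n * c r ^ (x.k + y.k) := by
          rw [zpow_b_mul_zpow_a]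
          group
      _ = a r ^ x.m * b r ^ x.n * c r ^ x.k * (a r ^ y.m * b r ^ y.n * c r ^ y.k) := by
          rw [mul_assoc _ (c r ^ x.k), hc x.k]
          group

theorem ofCoord_apply (x : NrCoord r) : ofCoord x = a r ^ x.m * b r ^ x.n * c r ^ x.k := rfl

@[simp]
theorem ofCoord_center (k : ℤ) : ofCoord ⟨0, 0, k⟩ = c r ^ k := by simp [ofCoord_apply]

theorem a_eq_ofCoord : a r = ofCoord ⟨1, 0, 0⟩ := by simp [ofCoord_apply]

theorem b_eq_ofCoord : b r = ofCoord ⟨0, 1, 0⟩ := by simp [ofCoord_apply]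

theorem c_eq_ofCoord : c r = ofCoord ⟨0, 0, 1⟩ := by simp

theorem ofCoord_surjective : Function.Surjective (ofCoord (r := r)) := by
  intro g
  refine PresentedGroup.generated_by _ ofCoord.range (fun i => ?_) g
  fin_cases i
  exacts [⟨_, a_eq_ofCoord.symm⟩, ⟨_, b_eq_ofCoord.symm⟩, ⟨_, c_eq_ofCoord.symm⟩]

section Lift

variable {H : Type*} [Group H] (x y z : H)

def lift (hxz : Commute x z) (hyz : Commute y z) (hxy : ⁅x, y⁆ = z ^ r) : Nr r →* H :=
  PresentedGroup.toGroup (f := ![x, y, z]) <| by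
    rintro w (rfl | rfl | rfl)
    · simpa [commutatorElement_eq_one_iff_commute] using hxz
    · simpa [commutatorElement_eq_one_iff_commute] using hyz
    · simp [hxy]

variable {x y z} (hxz : Commute x z) (hyz : Commute y z) (hxy : ⁅x, y⁆ = z ^ r)

@[simp] theorem lift_a : lift x y z hxz hyz hxy (a r) = x := PresentedGroup.toGroup.of _

@[simp] theorem lift_b : lift x y z hxz hyz hxy (b r) = y := PresentedGroup.toGroup.of _

@[simp] theorem lift_c : lift x y z hxz hyz hxy (c r) = z := PresentedGroup.toGroup.of _

end Lift

def endo (x y : NrCoord r) : Nr r →* Nr r :=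
  lift (ofCoord x) (ofCoord y) (c r ^ x.det y)
    ((commute_c _).zpow_left _).symm ((commute_c _).zpow_left _).symm <| by
      rw [← map_commutatorElement, NrCoord.commutatorElement_eq, ofCoord_center, ← zpow_mul,
        mul_comm]

@[simp] theorem endo_a (x y : NrCoord r) : endo x y (a r) = ofCoord x := lift_a ..

@[simp] theorem endo_b (x y : NrCoord r) : endo x y (b r) = ofCoord y := lift_b ..

@[simp] theorem endo_c (x y : NrCoord r) : endo x y (c r) = c r ^ x.det y :=
  lift_c ..

theorem endo_ofCoord (x y z : NrCoord r) :
    endo x y (ofCoord z) = ofCoord (x ^ z.m * y ^ z.n * ⟨0, 0, x.det y * z.k⟩) := by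
  rw [ofCoord_apply z]
  simp [endo, ← zpow_mul]

theorem hom_ext {H : Type*} [Group H] {f g : Nr r →* H} (ha : f (a r) = g (a r))
    (hb : f (b r) = g (b r)) (hc : f (c r) = g (c r)) : f = g :=
  PresentedGroup.ext fun i => by fin_cases i; exacts [ha, hb, hc]

theorem endo_comp_endo_eq_id {x y x' y' : NrCoord r}
    (ha : x' ^ x.m * y' ^ x.n * ⟨0, 0, x'.det y' * x.k⟩ = ⟨1, 0, 0⟩)
    (hb : x' ^ y.m * y' ^ y.n * ⟨0, 0, x'.det y' * y.k⟩ = ⟨0, 1, 0⟩)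
    (hc : x.det y * x'.det y' = 1) :
    (endo x' y').comp (endo x y) = MonoidHom.id (Nr r) := by
  refine hom_ext ?_ ?_ ?_ <;> simp only [MonoidHom.comp_apply, MonoidHom.id_apply]
  · rw [endo_a, endo_ofCoord, ha, a_eq_ofCoord]
  · rw [endo_b, endo_ofCoord, hb, b_eq_ofCoord]
  · rw [endo_c, map_zpow, endo_c, ← zpow_mul, mul_comm, hc, zpow_one]

variable (r) in
def phiHom : Nr r →* Nr r := endo ⟨2, 1, 0⟩ ⟨5, 2, 0⟩

variable (r) in
def phiInvHom : Nr r →* Nr r := endo ⟨-2, 1, 4 * r⟩ ⟨5, -2, 0⟩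

theorem phiInvHom_comp_phiHom : (phiInvHom r).comp (phiHom r) = MonoidHom.id (Nr r) := by
  refine endo_comp_endo_eq_id ?_ ?_ (by norm_num [NrCoord.det])
  all_goals
    simp only [NrCoord.ext_iff, NrCoord.mul_def, NrCoord.zpow_def, NrCoord.det]
    norm_num
    ring

theorem phiHom_comp_phiInvHom : (phiHom r).comp (phiInvHom r) = MonoidHom.id (Nr r) := by
  refine endo_comp_endo_eq_id ?_ ?_ (by norm_num [NrCoord.det])
  all_goals
    simp only [NrCoord.ext_iff, NrCoord.mul_def, NrCoord.zpow_def, NrCoord.det]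
    norm_num
    ring

variable (r) in
def phi : MulAut (Nr r) :=
  (phiHom r).toMulEquiv (phiInvHom r) phiInvHom_comp_phiHom phiHom_comp_phiInvHom

theorem phi_a : phi r (a r) = a r ^ 2 * b r := by
  simp [phi, phiHom, ofCoord_apply]

theorem phi_b : phi r (b r) = a r ^ 5 * b r ^ 2 := by
  simp [phi, phiHom, ofCoord_apply]

theorem phiHom_c : phiHom r (c r) = (c r)⁻¹ := by
  simp [phiHom, NrCoord.det]

theorem exists_twistedConj_endo_ofCoord (x y z w : NrCoord r) :
    ∃ k, twistedConj (endo x y) (ofCoord z)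
      (ofCoord ⟨z.m + w.m - (w.m * x.m + w.n * y.m), z.n + w.n - (w.m * x.n + w.n * y.n), k⟩) :=
  ⟨(w * z * (x ^ w.m * y ^ w.n * ⟨0, 0, x.det y * w.k⟩)⁻¹).k, ofCoord w, by
    rw [endo_ofCoord, ← map_inv, ← map_mul, ← map_mul]
    congr 1
    ext <;> simp [NrCoord.mul_def, NrCoord.inv_def, NrCoord.zpow_def] <;> ring⟩

theorem twistedConj_phiHom_mul_zpow_c (g : Nr r) (s : ℤ) :
    twistedConj (phiHom r) g (g * c r ^ (2 * s)) :=
  ⟨c r ^ s, by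
    rw [map_zpow, phiHom_c, inv_zpow, inv_inv, ((commute_c g).zpow_left s).eq]
    group⟩

theorem ofCoord_mul_zpow_c (x : NrCoord r) (j : ℤ) :
    ofCoord x * c r ^ j = ofCoord ⟨x.m, x.n, x.k + j⟩ := by
  rw [ofCoord_apply, ofCoord_apply, mul_assoc, ← zpow_add]

theorem finite_quot_twistedConj_phiHom : Finite (Quot (twistedConj (phiHom r))) := by
  refine Finite.of_surjective
    (fun i : ZMod 4 × ZMod 2 => Quot.mk _ (ofCoord ⟨i.1.val, 0, i.2.val⟩)) ?_
  rintro ⟨g⟩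
  obtain ⟨x, rfl⟩ := ofCoord_surjective g
  obtain ⟨k, hk⟩ : ∃ k, twistedConj (phiHom r) (ofCoord x) _ :=
    exists_twistedConj_endo_ofCoord ⟨2, 1, 0⟩ ⟨5, 2, 0⟩ x
    ⟨x.n - (x.m - x.n) / 4, (x.m - x.n) / 4, 0⟩
  refine ⟨((x.m - x.n : ℤ), (k : ZMod 2)), ?_⟩
  rw [Quot.sound hk, Quot.sound (twistedConj_phiHom_mul_zpow_c _ (-(k / 2))),
    ofCoord_mul_zpow_c]
  dsimp only
  congr 2
  ext <;> simp only [ZMod.val_intCast] <;> omega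

end Nr

theorem stmt19_general (r : ℤ) :
    ∃ φ : MulAut (PresentedGroup (NrRels r)),
      φ (PresentedGroup.of 0) = PresentedGroup.of 0 ^ 2 * PresentedGroup.of 1 ∧
      φ (PresentedGroup.of 1) = PresentedGroup.of 0 ^ 5 * PresentedGroup.of 1 ^ 2 ∧
      Finite (Quot (twistedConj φ.toMonoidHom)) :=
  ⟨Nr.phi r, Nr.phi_a, Nr.phi_b, Nr.finite_quot_twistedConj_phiHom⟩

/-- For `r ≠ 0`, the torsion-free nilpotent group `N_r` of Hirsch length 3 admits an
automorphism `a ↦ a²b`, `b ↦ a⁵b²` with finite Reidemeister number; hence `N_r`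
does not have the `R_∞` property. -/
theorem stmt19 (r : ℤ) (hr : r ≠ 0) :
    ∃ φ : MulAut (PresentedGroup (NrRels r)),
      φ (PresentedGroup.of 0) = PresentedGroup.of 0 ^ 2 * PresentedGroup.of 1 ∧
      φ (PresentedGroup.of 1) = PresentedGroup.of 0 ^ 5 * PresentedGroup.of 1 ^ 2 ∧
      Finite (Quot (twistedConj φ.toMonoidHom)) :=
  stmt19_general r
end
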